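/- arXiv:1601.00572 — 5 statements merged into one kernel-verified Lean document; each statement's English description precedes it below -/
import Mathlib

section
/- Let k ≥ 3. In ℤ[x,y], let H₁ = (∑_{i=0}^{2k-2} yⁱ) + x. Then H₁ + (∑_{j=1}^{k-2} j·y^{2k-3-2j})·(1 + y - y² - y³) = 1 + x + (k-1)·(y + y²). -/
open MvPolynomial Finset

/-!
Write `n = k - 2`, `G_n = ∑_{i < 2n+3} yⁱ` and `S_n = ∑_{j=1}^{n} j y^{2n+1-2j}`. Both satisfy a
shift recursion, `G_{n+1} = 1 + y + y² G_n` and `S_{n+1} = y² S_n + (n+1) y`, so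
`L_n = G_n + S_n (1 + y - y² - y³)` satisfies `L_{n+1} = 1 + y + y² L_n + (n+1) y (1 + y - y² - y³)`,
and induction from `L_0 = 1 + y + y²` gives `L_n = 1 + (n+1)(y + y²)`. The variable `x` only rides along.
-/

section CommRing

variable {R : Type*} [CommRing R] (y : R)

def weightedOddPowSum (n : ℕ) : R :=
  ∑ j ∈ Icc 1 n, (j : R) * y ^ (2 * n + 1 - 2 * j)

lemma weightedOddPowSum_succ (n : ℕ) :
    weightedOddPowSum y (n + 1) = y ^ 2 * weightedOddPowSum y n + (n + 1) * y := by
  rw [weightedOddPowSum, weightedOddPowSum, sum_Icc_succ_top (by omega), mul_sum]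
  congr 1
  · refine sum_congr rfl fun j hj => ?_
    rw [show 2 * (n + 1) + 1 - 2 * j = 2 + (2 * n + 1 - 2 * j) by grind, pow_add]
    ring
  · rw [show 2 * (n + 1) + 1 - 2 * (n + 1) = 1 by omega]
    push_cast
    ring

lemma geom_sum_range_add_two (m : ℕ) :
    ∑ i ∈ range (m + 2), y ^ i = 1 + y + y ^ 2 * ∑ i ∈ range m, y ^ i := by
  simp only [sum_range_succ', mul_sum]
  ring_nf

theorem geom_sum_add_weightedOddPowSum_mul (n : ℕ) :
    ∑ i ∈ range (2 * n + 3), y ^ i + weightedOddPowSum y n * (1 + y - y ^ 2 - y ^ 3) =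
      1 + (n + 1) * (y + y ^ 2) := by
  induction n with
  | zero => simp [weightedOddPowSum, sum_range_succ, add_assoc]
  | succ n ih =>
    rw [show 2 * (n + 1) + 3 = 2 * n + 3 + 2 by ring, geom_sum_range_add_two,
      weightedOddPowSum_succ]
    push_cast
    linear_combination y ^ 2 * ih

end CommRing

theorem stmt_11 (k : ℕ) (hk : 3 ≤ k) :
    let x : MvPolynomial (Fin 2) ℤ := X 0
    let y : MvPolynomial (Fin 2) ℤ := X 1
    let H₁ := (∑ i ∈ Finset.range (2 * k - 1), y ^ i) + x
    H₁ + (∑ j ∈ Finset.Icc 1 (k - 2), (j : MvPolynomial (Fin 2) ℤ) * y ^ (2 * k - 3 - 2 * j)) *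
        (1 + y - y ^ 2 - y ^ 3) =
      1 + x + ((k : MvPolynomial (Fin 2) ℤ) - 1) * (y + y ^ 2) := by
  intro x y H₁
  obtain ⟨n, rfl⟩ : ∃ n, k = n + 2 := ⟨k - 2, by omega⟩
  have hS : ∑ j ∈ Icc 1 (n + 2 - 2), (j : MvPolynomial (Fin 2) ℤ) * y ^ (2 * (n + 2) - 3 - 2 * j) =
      weightedOddPowSum y n :=
    sum_congr rfl fun j _ => by rw [show 2 * (n + 2) - 3 - 2 * j = 2 * n + 1 - 2 * j by omega]
  simp only [H₁, show 2 * (n + 2) - 1 = 2 * n + 3 by omega, hS]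
  push_cast
  linear_combination geom_sum_add_weightedOddPowSum_mul y n
end

section
/- Let k ≥ 3 and n = 2k. The set of common complex zeros of the four polynomials H₁ = (∑_{i=0}^{n-2} yⁱ) + x, H₂ = y^{n-2} + x·∑_{i=0}^{n-2} yⁱ, H₃ = y + ∑_{i=0}^{n-2} xⁱ, H₄ = y·∑_{i=0}^{n-2} xⁱ + x^{n-2} is exactly the set of pairs (ε, ε^{n-1}) where ε ∈ ℂ satisfies εⁿ = 1 and ε ≠ 1. -/
/-!
Write `n = p + 2` and `S(t) = ∑_{i ≤ p} tⁱ`. Eliminating `S(y)` between `H₁` and `H₂` gives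
`y^p = x²`, and eliminating it with `S(y) (y - 1) = y^{p+1} - 1` gives `(x + 1)(xy - 1) = 0`;
symmetrically `H₃, H₄` give `x^p = y²` and `(y + 1)(xy - 1) = 0`. So either `x = y = -1`, a root
of unity of even order, or `xy = 1`, and then `x^{p+2} = x² y² = 1` and `y = x y² = x^{p+1}`.
Conversely such a pair kills `(S(y) + x)(y - 1)`, and `y ≠ 1`.
-/

open Finset

section LPair

variable {R : Type*} [CommRing R] {p : ℕ} {x y : R}

/-- `(x, y)` is a common zero of `H₁` and `H₂` for `n = p + 2`; `H₃` and `H₄` are `H₁` and `H₂`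
with `x` and `y` exchanged. -/
def IsLPairZero (p : ℕ) (x y : R) : Prop :=
  (∑ i ∈ range (p + 1), y ^ i) + x = 0 ∧ y ^ p + x * ∑ i ∈ range (p + 1), y ^ i = 0

theorem IsLPairZero.pow_eq_sq (h : IsLPairZero p x y) : y ^ p = x ^ 2 := by
  linear_combination h.2 - x * h.1

theorem IsLPairZero.add_one_mul_mul_sub_one (h : IsLPairZero p x y) :
    (x + 1) * (x * y - 1) = 0 := by
  linear_combination (x * y + y - 1) * h.1 - y * h.2 - geom_sum_mul y (p + 1)

theorem IsLPairZero.ne_one [IsDomain R] [CharZero R] (h : IsLPairZero p x y) : x ≠ 1 := by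
  rintro rfl
  have hy : y = 1 := by
    have h2 : (2 : R) * (y - 1) = 0 := by linear_combination h.add_one_mul_mul_sub_one
    simpa [sub_eq_zero] using h2
  have hsum := h.1
  simp only [hy, one_pow, sum_const, card_range, nsmul_eq_mul, mul_one] at hsum
  exact_mod_cast hsum

theorem isLPairZero_of_mul_eq_one [IsDomain R] (hxy : x * y = 1) (hyx : y ^ (p + 1) = x)
    (hy : y ≠ 1) : IsLPairZero p x y := by
  have hS : (∑ i ∈ range (p + 1), y ^ i) + x = 0 := by
    have hmul : ((∑ i ∈ range (p + 1), y ^ i) + x) * (y - 1) = 0 := by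
      linear_combination geom_sum_mul y (p + 1) + hyx + hxy
    exact (mul_eq_zero.mp hmul).resolve_right (sub_ne_zero.mpr hy)
  refine ⟨hS, ?_⟩
  linear_combination x * hS + (x ^ 2 - y ^ p * (1 + x * y)) * hxy + x ^ 2 * y * hyx

theorem isLPairZero_and_swap_iff [IsDomain R] [CharZero R] (hp : Even p) :
    IsLPairZero p x y ∧ IsLPairZero p y x ↔ x ^ (p + 2) = 1 ∧ x ≠ 1 ∧ y = x ^ (p + 1) := by
  constructor
  · rintro ⟨h, hswap⟩
    rcases mul_eq_zero.mp h.add_one_mul_mul_sub_one with hx | hxy1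
    · have hy : y + 1 = 0 := by
        rcases mul_eq_zero.mp hswap.add_one_mul_mul_sub_one with hy | hyx1
        · exact hy
        · linear_combination -hyx1 + y * hx
      rw [eq_neg_of_add_eq_zero_left hx, eq_neg_of_add_eq_zero_left hy]
      exact ⟨(hp.add even_two).neg_one_pow, by norm_num, hp.add_one.neg_one_pow.symm⟩
    · refine ⟨?_, h.ne_one, ?_⟩
      · linear_combination x ^ 2 * hswap.pow_eq_sq + (x * y + 1) * hxy1
      · linear_combination -x * hswap.pow_eq_sq - y * hxy1
  · rintro ⟨hx, hx1, rfl⟩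
    have hxy : x * x ^ (p + 1) = 1 := by rw [← pow_succ']; exact hx
    have hyx : (x ^ (p + 1)) ^ (p + 1) = x := by
      rw [← pow_mul, show (p + 1) * (p + 1) = (p + 2) * p + 1 by ring, pow_succ, pow_mul, hx,
        one_pow, one_mul]
    have hy1 : x ^ (p + 1) ≠ 1 := fun h => hx1 (by simpa [h] using hxy)
    exact ⟨isLPairZero_of_mul_eq_one hxy hyx hy1,
      isLPairZero_of_mul_eq_one (by rw [mul_comm, hxy]) rfl hx1⟩

end LPair

theorem stmt_15 (k : ℕ) (hk : 3 ≤ k) (n : ℕ) (hn : n = 2 * k) (x y : ℂ) :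
    ((∑ i ∈ Finset.range (n - 1), y ^ i) + x = 0 ∧
     y ^ (n - 2) + x * ∑ i ∈ Finset.range (n - 1), y ^ i = 0 ∧
     y + ∑ i ∈ Finset.range (n - 1), x ^ i = 0 ∧
     y * (∑ i ∈ Finset.range (n - 1), x ^ i) + x ^ (n - 2) = 0) ↔
    (x ^ n = 1 ∧ x ≠ 1 ∧ y = x ^ (n - 1)) := by
  obtain ⟨p, rfl, hp⟩ : ∃ p, n = p + 2 ∧ Even p := ⟨2 * (k - 1), by omega, even_two_mul _⟩
  rw [Nat.add_sub_cancel, show p + 2 - 1 = p + 1 by omega, ← isLPairZero_and_swap_iff hp,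
    IsLPairZero, IsLPairZero, add_comm y, add_comm (y * _), and_assoc]
end

section
/- Let n ≥ 2 and p, q ≥ 1 be integers. The polynomial f(x,y) = (∑_{i=0}^{q-1} xⁱ)·(∑_{j=0}^{p-1} yʲ) vanishes at every point (ε, ε^{-1}) with ε ∈ ℂ, εⁿ = 1, ε ≠ 1, if and only if n divides p or n divides q. -/
/-!
Both factors are geometric sums, and for `x ≠ 1` the sum `∑_{i<m} x^i = (x^m - 1)/(x - 1)`
vanishes exactly when `x^m = 1`. If `n ∣ p` or `n ∣ q`, this kills one factor at every
nontrivial `n`-th root of unity. Conversely, evaluating at a primitive `n`-th root `ζ`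
(for which `ζ⁻¹` is primitive too), one factor vanishes, and `ζ^m = 1` forces `n ∣ m`.
-/

open Finset

lemma geom_sum_eq_zero_iff_pow_eq_one {K : Type*} [DivisionRing K] {x : K} (hx : x ≠ 1)
    (m : ℕ) : ∑ i ∈ range m, x ^ i = 0 ↔ x ^ m = 1 := by
  rw [geom_sum_eq hx, div_eq_zero_iff, sub_eq_zero, sub_eq_zero, or_iff_left hx]

lemma IsPrimitiveRoot.geom_sum_eq_zero_iff_dvd {K : Type*} [Field K] {ζ : K} {n : ℕ}
    (hζ : IsPrimitiveRoot ζ n) (hn : 1 < n) (m : ℕ) :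
    ∑ i ∈ range m, ζ ^ i = 0 ↔ n ∣ m := by
  rw [geom_sum_eq_zero_iff_pow_eq_one (hζ.ne_one hn), hζ.pow_eq_one_iff_dvd]

lemma geom_sum_eq_zero_of_pow_eq_one_of_dvd {K : Type*} [DivisionRing K] {x : K} {n m : ℕ}
    (hx : x ^ n = 1) (hx1 : x ≠ 1) (hnm : n ∣ m) : ∑ i ∈ range m, x ^ i = 0 := by
  obtain ⟨k, rfl⟩ := hnm
  rw [geom_sum_eq_zero_iff_pow_eq_one hx1, pow_mul, hx, one_pow]

theorem stmt_16_general (n p q : ℕ) (hn : 2 ≤ n) :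
    (∀ ε : ℂ, ε ^ n = 1 → ε ≠ 1 →
        (∑ i ∈ Finset.range q, ε ^ i) * (∑ j ∈ Finset.range p, (ε⁻¹) ^ j) = 0) ↔
    (n ∣ p ∨ n ∣ q) := by
  constructor
  · intro h
    have hζ := Complex.isPrimitiveRoot_exp n (by omega)
    rcases mul_eq_zero.1 (h _ hζ.pow_eq_one (hζ.ne_one hn)) with hq | hp
    · exact Or.inr ((hζ.geom_sum_eq_zero_iff_dvd hn q).1 hq)
    · exact Or.inl ((hζ.inv.geom_sum_eq_zero_iff_dvd hn p).1 hp)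
  · rintro (hp | hq) ε hε hε1
    · rw [geom_sum_eq_zero_of_pow_eq_one_of_dvd (by rw [inv_pow, hε, inv_one])
        (inv_ne_one.2 hε1) hp, mul_zero]
    · rw [geom_sum_eq_zero_of_pow_eq_one_of_dvd hε hε1 hq, zero_mul]

theorem stmt_16 (n p q : ℕ) (hn : 2 ≤ n) (hp : 1 ≤ p) (hq : 1 ≤ q) :
    (∀ ε : ℂ, ε ^ n = 1 → ε ≠ 1 →
        (∑ i ∈ Finset.range q, ε ^ i) * (∑ j ∈ Finset.range p, (ε⁻¹) ^ j) = 0) ↔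
    (n ∣ p ∨ n ∣ q) :=
  stmt_16_general n p q hn
end

section
/- Let n ≥ 2 and p, q ≥ 1 be integers. In ℤ[y], the polynomial ∑_{i=0}^{n-1} yⁱ divides the product (∑_{i=0}^{p-1} yⁱ)·(∑_{j=0}^{q-1} yʲ) if and only if n divides p or n divides q. -/
/-!
The cyclotomic polynomial `Φₙ` is irreducible, hence prime, in `ℤ[X]`, and for `n ≥ 2` it divides
`1 + X + ⋯ + X^(n-1)`. So if the latter divides the product, `Φₙ` divides one of the factors,
say `1 + X + ⋯ + X^(p-1)`, and evaluating at a primitive `n`-th root of unity `ζ ∈ ℂ` gives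
`ζ ^ p = 1`, i.e. `n ∣ p`. Conversely `1 + x + ⋯ + x^(n-1)` divides `1 + x + ⋯ + x^(nk-1)`, the
latter being the sum of the `k` blocks `x^(nj) (1 + x + ⋯ + x^(n-1))`.
-/

open Polynomial

theorem geom_sum_dvd_geom_sum_of_dvd {R : Type*} [Semiring R] (x : R) {n m : ℕ} (h : n ∣ m) :
    (∑ i ∈ Finset.range n, x ^ i) ∣ ∑ i ∈ Finset.range m, x ^ i := by
  obtain ⟨k, rfl⟩ := h
  induction k with
  | zero => simp
  | succ k ih =>
    rw [Nat.mul_succ, Finset.sum_range_add]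
    simp_rw [add_comm (n * k), pow_add, ← Finset.sum_mul]
    exact dvd_add ih (dvd_mul_right _ _)

theorem dvd_of_cyclotomic_dvd_geom_sum {n m : ℕ} (hn : 0 < n)
    (h : cyclotomic n ℤ ∣ ∑ i ∈ Finset.range m, (X : ℤ[X]) ^ i) : n ∣ m := by
  have hζ := Complex.isPrimitiveRoot_exp n hn.ne'
  set ζ := Complex.exp (2 * Real.pi * Complex.I / n)
  have hmap : cyclotomic n ℂ ∣ ∑ i ∈ Finset.range m, (X : ℂ[X]) ^ i := by
    simpa [Polynomial.map_sum] using Polynomial.map_dvd (Int.castRingHom ℂ) h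
  have hsum : ∑ i ∈ Finset.range m, ζ ^ i = 0 := by
    simpa using (hζ.isRoot_cyclotomic hn).dvd hmap
  have hpow : ζ ^ m = 1 := by
    rw [← sub_eq_zero, ← geom_sum_mul, hsum, zero_mul]
  exact (hζ.pow_eq_one_iff_dvd m).mp hpow

theorem stmt_17_general (n p q : ℕ) (hn : 2 ≤ n) :
    (∑ i ∈ Finset.range n, (X : ℤ[X]) ^ i) ∣
        (∑ i ∈ Finset.range p, (X : ℤ[X]) ^ i) * (∑ j ∈ Finset.range q, (X : ℤ[X]) ^ j) ↔
    (n ∣ p ∨ n ∣ q) := by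
  have hn0 : 0 < n := by omega
  constructor
  · intro h
    have hprime : Prime (cyclotomic n ℤ) := (cyclotomic.irreducible hn0).prime
    have hcyc : cyclotomic n ℤ ∣ ∑ i ∈ Finset.range n, (X : ℤ[X]) ^ i :=
      cyclotomic_dvd_geom_sum_of_dvd ℤ dvd_rfl (by omega)
    exact (hprime.dvd_or_dvd (hcyc.trans h)).imp
      (dvd_of_cyclotomic_dvd_geom_sum hn0) (dvd_of_cyclotomic_dvd_geom_sum hn0)
  · rintro (h | h)
    · exact (geom_sum_dvd_geom_sum_of_dvd X h).trans (dvd_mul_right _ _)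
    · exact (geom_sum_dvd_geom_sum_of_dvd X h).trans (dvd_mul_left _ _)

theorem stmt_17 (n p q : ℕ) (hn : 2 ≤ n) (hp : 1 ≤ p) (hq : 1 ≤ q) :
    (∑ i ∈ Finset.range n, (X : ℤ[X]) ^ i) ∣
        (∑ i ∈ Finset.range p, (X : ℤ[X]) ^ i) * (∑ j ∈ Finset.range q, (X : ℤ[X]) ^ j) ↔
    (n ∣ p ∨ n ∣ q) :=
  stmt_17_general n p q hn
end

section
/- Let p, q ≥ 1 and let P(y) = (∑_{i=0}^{p-1} yⁱ)·(∑_{j=0}^{q-1} yʲ) ∈ ℤ[y]. Then the value of the derivative P′ at y = -1 equals: p/2 if p is even and q is odd; q/2 if p is odd and q is even; and 0 if both p and q are even. -/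
open Polynomial Finset

/-!
Write `S n = ∑_{i<n} Xⁱ`, so that `P = S p * S q`. For even `n = 2k` one has
`S n = (1 + X) * ∑_{i<k} X²ⁱ`, hence `S n (-1) = 0` and `S n' (-1) = k`, while
`S (2k + 1) (-1) = 1`. The product rule `P' = S p' * S q + S p * S q'` then gives all three cases.
-/

section GeomSum

variable {R : Type*} [CommRing R]

theorem sum_range_two_mul_X_pow (k : ℕ) :
    ∑ i ∈ range (2 * k), (X : R[X]) ^ i = (1 + X) * ∑ i ∈ range k, (X ^ 2) ^ i := by
  induction k with
  | zero => simp
  | succ k ih =>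
    rw [show 2 * (k + 1) = 2 * k + 1 + 1 by ring, sum_range_succ, sum_range_succ, ih,
      sum_range_succ]
    ring

theorem eval_neg_one_sum_range_X_pow_of_even {n : ℕ} (hn : Even n) :
    (∑ i ∈ range n, (X : R[X]) ^ i).eval (-1) = 0 := by
  obtain ⟨k, rfl⟩ := even_iff_exists_two_mul.mp hn
  simp [sum_range_two_mul_X_pow]

theorem eval_neg_one_sum_range_X_pow_of_odd {n : ℕ} (hn : Odd n) :
    (∑ i ∈ range n, (X : R[X]) ^ i).eval (-1) = 1 := by
  obtain ⟨k, rfl⟩ := hn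
  rw [sum_range_succ, eval_add, eval_neg_one_sum_range_X_pow_of_even (even_two_mul k)]
  simp

theorem eval_neg_one_derivative_sum_range_X_pow_two_mul (k : ℕ) :
    (derivative (∑ i ∈ range (2 * k), (X : R[X]) ^ i)).eval (-1) = k := by
  simp [sum_range_two_mul_X_pow, derivative_mul, eval_finsetSum]

end GeomSum

theorem stmt_18_general (p q : ℕ) :
    let P : ℤ[X] := (∑ i ∈ Finset.range p, X ^ i) * (∑ j ∈ Finset.range q, X ^ j)
    (Even p → Odd q → (derivative P).eval (-1) = (p : ℤ) / 2) ∧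
    (Odd p → Even q → (derivative P).eval (-1) = (q : ℤ) / 2) ∧
    (Even p → Even q → (derivative P).eval (-1) = 0) := by
  intro P
  have hP : (derivative P).eval (-1) =
      (derivative (∑ i ∈ range p, (X : ℤ[X]) ^ i)).eval (-1) *
          (∑ j ∈ range q, (X : ℤ[X]) ^ j).eval (-1) +
        (∑ i ∈ range p, (X : ℤ[X]) ^ i).eval (-1) *
          (derivative (∑ j ∈ range q, (X : ℤ[X]) ^ j)).eval (-1) := by
    simp only [P, derivative_mul, eval_add, eval_mul]
  refine ⟨fun hp hq => ?_, fun hp hq => ?_, fun hp hq => ?_⟩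
  · obtain ⟨k, rfl⟩ := even_iff_exists_two_mul.mp hp
    rw [hP, eval_neg_one_derivative_sum_range_X_pow_two_mul,
      eval_neg_one_sum_range_X_pow_of_odd hq, eval_neg_one_sum_range_X_pow_of_even hp]
    omega
  · obtain ⟨k, rfl⟩ := even_iff_exists_two_mul.mp hq
    rw [hP, eval_neg_one_derivative_sum_range_X_pow_two_mul,
      eval_neg_one_sum_range_X_pow_of_odd hp, eval_neg_one_sum_range_X_pow_of_even hq]
    omega
  · rw [hP, eval_neg_one_sum_range_X_pow_of_even hp, eval_neg_one_sum_range_X_pow_of_even hq]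
    ring

theorem stmt_18 (p q : ℕ) (hp : 1 ≤ p) (hq : 1 ≤ q) :
    let P : ℤ[X] := (∑ i ∈ Finset.range p, X ^ i) * (∑ j ∈ Finset.range q, X ^ j)
    (Even p → Odd q → (derivative P).eval (-1) = (p : ℤ) / 2) ∧
    (Odd p → Even q → (derivative P).eval (-1) = (q : ℤ) / 2) ∧
    (Even p → Even q → (derivative P).eval (-1) = 0) :=
  stmt_18_general p q
end
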